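/- Let v : [0,1] → ℝ satisfy L' ≤ |v'(q)| ≤ L for positive constants L', L. Then n ∫₀^1 |v'(q)| H(q) dq = Θ(log n), where H(q) = ∫₀^q (n−1)(1−t)^(n−2) t · ((1/t)∫₀^t ((1−x)^(n−1) + (n−1)(1−x)^(n−2) x) dx) / ((1−t)^(n−1) + (n−1)(1−t)^(n−2) t) dt. -/

import Mathlib

/-!
Cancelling `(1 - t) ^ (n - 2)` turns the integrand of `Htwo n` into
`(n - 1) F(t) / (1 + (n - 2) t)`, where
`F(t) = ∫₀^t P(Bin(n - 1, x) ≤ 1) dx = 2 (1 - (1 - t) ^ n) / n - t (1 - t) ^ (n - 1)`.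
Since `F ≤ 2 / n` everywhere and `F ≥ 1 / (4 n)` once `t ≥ 1 / (2 n)`, this density is at most `2`
and is of order `1 / (n t)` for `1 / n ≲ t ≤ 1 / 2`; integrating, `n · Htwo n q = Θ(log n)` for
`q ∈ [1/2, 1]`. As `Htwo n` is increasing and `|v'|` lies between `L'` and `L`, the weighted
integral is squeezed between `L' · Htwo n (1/2) / 2` and `L · Htwo n 1`.
-/

open intervalIntegral MeasureTheory Set

/-- The distribution-free part of the total effort of a two-contestant winner-take-all
contest among `n` registered contestants:
`H(q) = ∫₀^q (n−1)(1−t)^(n−2) t · ((1/t)∫₀^t ((1−x)^(n−1) + (n−1)(1−x)^(n−2) x) dx)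
  / ((1−t)^(n−1) + (n−1)(1−t)^(n−2) t) dt`. -/
noncomputable def Htwo (n : ℕ) (q : ℝ) : ℝ :=
  ∫ t in (0:ℝ)..q,
    (n - 1 : ℝ) * (1 - t) ^ (n - 2) * t *
      ((1 / t) * ∫ x in (0:ℝ)..t, ((1 - x) ^ (n - 1) + (n - 1 : ℝ) * (1 - x) ^ (n - 2) * x)) /
      ((1 - t) ^ (n - 1) + (n - 1 : ℝ) * (1 - t) ^ (n - 2) * t)

lemma integral_le_mul_log_of_le_div {f : ℝ → ℝ} {a b c : ℝ} (ha : 0 < a) (hab : a ≤ b)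
    (hf : IntervalIntegrable f volume a b) (h : ∀ t ∈ Icc a b, f t ≤ c / t) :
    ∫ t in a..b, f t ≤ c * Real.log (b / a) := by
  have h0 : (0 : ℝ) ∉ uIcc a b := by rw [uIcc_of_le hab]; exact fun h0 => ha.not_ge h0.1
  have hinv : IntervalIntegrable (fun t : ℝ => c / t) volume a b := by
    simpa only [div_eq_mul_inv] using
      (intervalIntegrable_inv (fun t ht => ne_of_mem_of_not_mem ht h0) continuousOn_id).const_mul c
  calc ∫ t in a..b, f t ≤ ∫ t in a..b, c / t := integral_mono_on hab hf hinv h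
    _ = c * Real.log (b / a) := by
      simp only [div_eq_mul_inv c, intervalIntegral.integral_const_mul, integral_inv h0]

lemma mul_log_le_integral_of_div_le {f : ℝ → ℝ} {a b c : ℝ} (ha : 0 < a) (hab : a ≤ b)
    (hf : IntervalIntegrable f volume a b) (h : ∀ t ∈ Icc a b, c / t ≤ f t) :
    c * Real.log (b / a) ≤ ∫ t in a..b, f t := by
  have := integral_le_mul_log_of_le_div (f := fun t => -f t) (c := -c) ha hab hf.neg
    fun t ht => by rw [neg_div]; exact neg_le_neg (h t ht)
  simp only [intervalIntegral.integral_neg, neg_mul] at this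
  linarith

lemma intervalIntegrable_of_hasDerivAt_of_abs_le {v v' : ℝ → ℝ} {a b L : ℝ} (hab : a ≤ b)
    (hderiv : ∀ q ∈ Icc a b, HasDerivAt v (v' q) q) (hbound : ∀ q ∈ Icc a b, |v' q| ≤ L) :
    IntervalIntegrable v' volume a b := by
  have hIoc : ∀ᵐ q ∂volume.restrict (uIoc a b), q ∈ Icc a b := by
    rw [uIoc_of_le hab]
    filter_upwards [ae_restrict_mem measurableSet_Ioc] with q hq using Ioc_subset_Icc_self hq
  have hmeas : AEStronglyMeasurable v' (volume.restrict (uIoc a b)) := by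
    refine (measurable_deriv v).aestronglyMeasurable.congr ?_
    filter_upwards [hIoc] with q hq using (hderiv q hq).deriv
  refine (intervalIntegrable_const (c := L)).mono_fun' hmeas ?_
  filter_upwards [hIoc] with q hq using hbound q hq

section MonotoneWeight
variable {w H : ℝ → ℝ} {a b : ℝ}

lemma integral_mul_le_of_monotoneOn {L : ℝ} (hab : a ≤ b)
    (hwH : IntervalIntegrable (fun q => w q * H q) volume a b) (hL : 0 ≤ L)
    (hw : ∀ q ∈ Icc a b, w q ≤ L) (hH : ∀ q ∈ Icc a b, 0 ≤ H q) (hmono : MonotoneOn H (Icc a b)) :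
    ∫ q in a..b, w q * H q ≤ L * H b * (b - a) := by
  have hb : b ∈ Icc a b := ⟨hab, le_rfl⟩
  calc ∫ q in a..b, w q * H q ≤ ∫ _ in a..b, L * H b :=
        integral_mono_on hab hwH intervalIntegrable_const fun q hq =>
          mul_le_mul (hw q hq) (hmono hq hb hq.2) (hH q hq) hL
    _ = L * H b * (b - a) := by simp only [intervalIntegral.integral_const, smul_eq_mul]; ring

lemma mul_le_integral_mul_of_monotoneOn {L' c : ℝ} (hac : a ≤ c) (hcb : c ≤ b)
    (hwH : IntervalIntegrable (fun q => w q * H q) volume a b) (hL' : 0 ≤ L')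
    (hw : ∀ q ∈ Icc a b, L' ≤ w q) (hH : ∀ q ∈ Icc a b, 0 ≤ H q) (hmono : MonotoneOn H (Icc a b)) :
    L' * H c * (b - c) ≤ ∫ q in a..b, w q * H q := by
  have hsub : Icc c b ⊆ Icc a b := Icc_subset_Icc_left hac
  calc L' * H c * (b - c) = ∫ _ in c..b, L' * H c := by
        simp only [intervalIntegral.integral_const, smul_eq_mul]; ring
    _ ≤ ∫ q in c..b, w q * H q :=
        integral_mono_on hcb intervalIntegrable_const
          (hwH.mono_set (by rw [uIcc_of_le hcb, uIcc_of_le (hac.trans hcb)]; exact hsub))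
          fun q hq => mul_le_mul (hw q (hsub hq)) (hmono ⟨hac, hcb⟩ (hsub hq) hq.1)
            (hH _ ⟨hac, hcb⟩) (hL'.trans (hw q (hsub hq)))
    _ ≤ ∫ q in a..b, w q * H q := by
      refine integral_mono_interval hac hcb le_rfl ?_ hwH
      filter_upwards [ae_restrict_mem measurableSet_Ioc] with q hq
      have hq' : q ∈ Icc a b := Ioc_subset_Icc_self hq
      exact mul_nonneg (hL'.trans (hw q hq')) (hH q hq')

end MonotoneWeight

-- `P(Bin(n - 1, x) ≤ 1)`
noncomputable def lowerTailProb (n : ℕ) (x : ℝ) : ℝ :=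
  (1 - x) ^ (n - 1) + ((n : ℝ) - 1) * (1 - x) ^ (n - 2) * x

noncomputable def lowerTailPrimitive (n : ℕ) (t : ℝ) : ℝ :=
  2 * (1 - (1 - t) ^ n) / n - t * (1 - t) ^ (n - 1)

section lowerTail

variable {n : ℕ}

lemma continuous_lowerTailProb : Continuous (lowerTailProb n) := by
  unfold lowerTailProb; fun_prop

lemma hasDerivAt_lowerTailPrimitive (hn : n ≠ 0) (t : ℝ) :
    HasDerivAt (lowerTailPrimitive n) (lowerTailProb n t) t := by
  have hpow : ∀ k : ℕ, HasDerivAt (fun t : ℝ => (1 - t) ^ k) (k * (1 - t) ^ (k - 1) * (-1)) t :=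
    fun k => ((hasDerivAt_id t).const_sub 1).pow k
  have h := ((((hasDerivAt_const t (1 : ℝ)).sub (hpow n)).const_mul 2).div_const (n : ℝ)).sub
    ((hasDerivAt_id' t).mul (hpow (n - 1)))
  refine (h : HasDerivAt (lowerTailPrimitive n) _ t).congr_deriv ?_
  rw [lowerTailProb, Nat.cast_sub (Nat.one_le_iff_ne_zero.mpr hn), Nat.sub_sub]
  field_simp
  ring

lemma integral_lowerTailProb (hn : n ≠ 0) (a b : ℝ) :
    ∫ x in a..b, lowerTailProb n x = lowerTailPrimitive n b - lowerTailPrimitive n a :=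
  integral_eq_sub_of_hasDerivAt (fun x _ => hasDerivAt_lowerTailPrimitive hn x)
    (continuous_lowerTailProb.intervalIntegrable a b)

lemma integral_zero_lowerTailProb (hn : n ≠ 0) (t : ℝ) :
    ∫ x in (0 : ℝ)..t, lowerTailProb n x = lowerTailPrimitive n t := by
  simp [integral_lowerTailProb hn, lowerTailPrimitive]

lemma lowerTailProb_nonneg (hn : n ≠ 0) {x : ℝ} (hx : x ∈ Icc (0 : ℝ) 1) :
    0 ≤ lowerTailProb n x := by
  have h1 : (1 : ℝ) ≤ n := by exact_mod_cast Nat.one_le_iff_ne_zero.mpr hn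
  have h1x : 0 ≤ 1 - x := by linarith [hx.2]
  have := mul_nonneg (mul_nonneg (sub_nonneg.mpr h1) (pow_nonneg h1x (n - 2))) hx.1
  unfold lowerTailProb
  positivity

lemma half_le_lowerTailProb (hn : n ≠ 0) {x : ℝ} (hx : x ∈ Icc (0 : ℝ) (1 / (2 * n))) :
    1 / 2 ≤ lowerTailProb n x := by
  have h1 : (1 : ℝ) ≤ n := by exact_mod_cast Nat.one_le_iff_ne_zero.mpr hn
  have hnx : n * x ≤ 1 / 2 := by
    have := hx.2; rw [le_div_iff₀ (by positivity)] at this; linarith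
  have hx1 : x ≤ 1 := by nlinarith [hx.1]
  have hbern : 1 + ((n - 1 : ℕ) : ℝ) * -x ≤ (1 + -x) ^ (n - 1) :=
    one_add_mul_le_pow (by linarith) _
  rw [Nat.cast_sub (by exact_mod_cast h1), Nat.cast_one, ← sub_eq_add_neg] at hbern
  have := mul_nonneg (mul_nonneg (sub_nonneg.mpr h1) (pow_nonneg (sub_nonneg.mpr hx1) (n - 2))) hx.1
  unfold lowerTailProb
  nlinarith [hx.1]

lemma lowerTailPrimitive_monotoneOn (hn : n ≠ 0) :
    MonotoneOn (lowerTailPrimitive n) (Icc 0 1) := by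
  intro s hs t ht hst
  have := integral_nonneg (μ := volume) hst fun x hx =>
    lowerTailProb_nonneg hn ⟨hs.1.trans hx.1, hx.2.trans ht.2⟩
  rw [integral_lowerTailProb hn] at this
  linarith

lemma lowerTailPrimitive_nonneg (hn : n ≠ 0) {t : ℝ} (ht : t ∈ Icc (0 : ℝ) 1) :
    0 ≤ lowerTailPrimitive n t := by
  simpa [lowerTailPrimitive] using
    lowerTailPrimitive_monotoneOn hn ⟨le_rfl, zero_le_one⟩ ht ht.1

lemma lowerTailPrimitive_le {t : ℝ} (ht : t ∈ Icc (0 : ℝ) 1) :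
    lowerTailPrimitive n t ≤ 2 / n := by
  have h1t : 0 ≤ 1 - t := by linarith [ht.2]
  have := mul_nonneg ht.1 (pow_nonneg h1t (n - 1))
  have : 2 * (1 - (1 - t) ^ n) / n ≤ 2 / n := by
    gcongr; linarith [pow_nonneg h1t n]
  unfold lowerTailPrimitive
  linarith

lemma le_lowerTailPrimitive (hn : n ≠ 0) {t : ℝ} (ht : t ∈ Icc (1 / (2 * n) : ℝ) 1) :
    1 / (4 * n) ≤ lowerTailPrimitive n t := by
  have h1 : (1 : ℝ) ≤ n := by exact_mod_cast Nat.one_le_iff_ne_zero.mpr hn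
  set a : ℝ := 1 / (2 * n)
  have ha : a ∈ Icc (0 : ℝ) 1 :=
    ⟨by positivity, by rw [div_le_one (by positivity)]; linarith⟩
  calc 1 / (4 * n) = ∫ _ in (0 : ℝ)..a, (1 / 2 : ℝ) := by
        simp only [intervalIntegral.integral_const, smul_eq_mul, a]; field_simp; ring
    _ ≤ ∫ x in (0 : ℝ)..a, lowerTailProb n x :=
        integral_mono_on ha.1 intervalIntegrable_const
          (continuous_lowerTailProb.intervalIntegrable _ _)
          fun x hx => half_le_lowerTailProb hn hx
    _ = lowerTailPrimitive n a := integral_zero_lowerTailProb hn a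
    _ ≤ lowerTailPrimitive n t :=
        lowerTailPrimitive_monotoneOn hn ha ⟨ha.1.trans ht.1, ht.2⟩ ht.1

lemma sub_one_mul_lowerTailPrimitive_le (hn : n ≠ 0) {t : ℝ} (ht : t ∈ Icc (0 : ℝ) 1) :
    ((n : ℝ) - 1) * lowerTailPrimitive n t ≤ 2 := by
  have h1 : (1 : ℝ) ≤ n := by exact_mod_cast Nat.one_le_iff_ne_zero.mpr hn
  calc ((n : ℝ) - 1) * lowerTailPrimitive n t ≤ ((n : ℝ) - 1) * (2 / n) :=
        mul_le_mul_of_nonneg_left (lowerTailPrimitive_le ht) (by linarith)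
    _ ≤ 2 := by rw [mul_div_assoc', div_le_iff₀ (by positivity)]; linarith

end lowerTail

-- The integrand of `Htwo` after cancelling `(1 - t) ^ (n - 2)`; the two agree on `(0, 1)`.
noncomputable def htwoDensity (n : ℕ) (t : ℝ) : ℝ :=
  ((n : ℝ) - 1) * lowerTailPrimitive n t / (1 + ((n : ℝ) - 2) * t)

section htwoDensity
variable {n : ℕ}

lemma one_le_htwoDensity_denom (hn : 2 ≤ n) {t : ℝ} (ht : 0 ≤ t) : 1 ≤ 1 + ((n : ℝ) - 2) * t := by
  have h2 : (2 : ℝ) ≤ n := by exact_mod_cast hn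
  have := mul_nonneg (sub_nonneg.mpr h2) ht
  linarith

lemma htwoDensity_continuousOn (hn : 2 ≤ n) : ContinuousOn (htwoDensity n) (Ici 0) :=
  ContinuousOn.div (by unfold lowerTailPrimitive; fun_prop) (by fun_prop) fun _ ht =>
    (one_pos.trans_le (one_le_htwoDensity_denom hn ht)).ne'

lemma intervalIntegrable_htwoDensity (hn : 2 ≤ n) {a b : ℝ} (ha : 0 ≤ a) (hb : 0 ≤ b) :
    IntervalIntegrable (htwoDensity n) volume a b :=
  ((htwoDensity_continuousOn hn).mono fun _ ht => le_trans (le_min ha hb) ht.1).intervalIntegrable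

lemma htwoDensity_nonneg (hn : 2 ≤ n) {t : ℝ} (ht : t ∈ Icc (0 : ℝ) 1) : 0 ≤ htwoDensity n t := by
  have h1 : (1 : ℝ) ≤ n := by exact_mod_cast (by omega : 1 ≤ n)
  have hF := lowerTailPrimitive_nonneg (by omega : n ≠ 0) ht
  have hden := one_le_htwoDensity_denom hn ht.1
  exact div_nonneg (mul_nonneg (by linarith) hF) (by linarith)

lemma htwoDensity_le_two (hn : 2 ≤ n) {t : ℝ} (ht : t ∈ Icc (0 : ℝ) 1) : htwoDensity n t ≤ 2 := by
  have hnum := sub_one_mul_lowerTailPrimitive_le (by omega : n ≠ 0) ht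
  have hden := one_le_htwoDensity_denom hn ht.1
  rw [htwoDensity, div_le_iff₀ (by linarith)]
  linarith

lemma htwoDensity_le_div (hn : 2 ≤ n) {t : ℝ} (ht : t ∈ Ioc (0 : ℝ) 1) :
    htwoDensity n t ≤ (4 / n) / t := by
  have h2 : (2 : ℝ) ≤ n := by exact_mod_cast hn
  have hnum := sub_one_mul_lowerTailPrimitive_le (by omega : n ≠ 0) (Ioc_subset_Icc_self ht)
  have hnt : 0 < n * t := mul_pos (by positivity) ht.1
  have hden : n * t / 2 ≤ 1 + ((n : ℝ) - 2) * t := by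
    have := mul_nonneg (sub_nonneg.mpr h2) ht.1.le
    linarith [ht.2]
  rw [htwoDensity, div_div, div_le_div_iff₀ (by linarith) hnt]
  nlinarith [mul_le_mul_of_nonneg_right hnum hnt.le]

lemma div_le_htwoDensity (hn : 2 ≤ n) {t : ℝ} (ht : t ∈ Icc (1 / (2 * n) : ℝ) (1 / 2)) :
    (1 / (24 * n)) / t ≤ htwoDensity n t := by
  have h2 : (2 : ℝ) ≤ n := by exact_mod_cast hn
  have ht0 : 0 < t := lt_of_lt_of_le (by positivity) ht.1
  have hF := le_lowerTailPrimitive (by omega : n ≠ 0) ⟨ht.1, ht.2.trans (by norm_num)⟩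
  have hnum : 1 / 8 ≤ ((n : ℝ) - 1) * lowerTailPrimitive n t :=
    calc (1 / 8 : ℝ) = n / 2 * (1 / (4 * n)) := by field_simp; ring
      _ ≤ ((n : ℝ) - 1) * lowerTailPrimitive n t :=
        mul_le_mul (by linarith) hF (by positivity) (by linarith)
  have hden : 1 + ((n : ℝ) - 2) * t ≤ 3 * (n * t) := by
    have : 1 ≤ 2 * n * t := by rw [← div_le_iff₀' (by positivity)]; exact ht.1
    nlinarith
  rw [htwoDensity, div_div, div_le_div_iff₀ (by positivity)
    (by linarith [one_le_htwoDensity_denom hn ht0.le])]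
  nlinarith [mul_le_mul_of_nonneg_right hnum (by positivity : (0 : ℝ) ≤ 24 * n * t)]

end htwoDensity

section Htwo
variable {n : ℕ}

lemma htwo_eq_integral (hn : 2 ≤ n) {q : ℝ} (hq : q ∈ Icc (0 : ℝ) 1) :
    Htwo n q = ∫ t in (0 : ℝ)..q, htwoDensity n t := by
  refine integral_congr_Ioo_of_le hq.1 fun t ht => ?_
  have h1t : 0 < 1 - t := by linarith [ht.2.trans_le hq.2]
  have hinner := integral_zero_lowerTailProb (by omega : n ≠ 0) t
  have hpow : (1 - t) ^ (n - 1) = (1 - t) ^ (n - 2) * (1 - t) := by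
    rw [← pow_succ]; congr 1; omega
  unfold lowerTailProb at hinner
  simp only [hinner, htwoDensity, hpow]
  have ht0 : 0 < t := ht.1
  have hpos : 0 < (1 - t) ^ (n - 2) := pow_pos h1t _
  field_simp
  ring

lemma htwo_monotoneOn (hn : 2 ≤ n) : MonotoneOn (Htwo n) (Icc 0 1) := by
  intro p hp q hq hpq
  rw [htwo_eq_integral hn hp, htwo_eq_integral hn hq]
  refine integral_mono_interval le_rfl hp.1 hpq ?_ (intervalIntegrable_htwoDensity hn le_rfl hq.1)
  filter_upwards [ae_restrict_mem measurableSet_Ioc] with t ht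
  exact htwoDensity_nonneg hn ⟨ht.1.le, ht.2.trans hq.2⟩

lemma htwo_nonneg (hn : 2 ≤ n) {q : ℝ} (hq : q ∈ Icc (0 : ℝ) 1) : 0 ≤ Htwo n q := by
  simpa [htwo_eq_integral hn ⟨le_rfl, zero_le_one⟩] using
    htwo_monotoneOn hn ⟨le_rfl, zero_le_one⟩ hq hq.1

lemma htwo_continuousOn (hn : 2 ≤ n) : ContinuousOn (Htwo n) (Icc 0 1) := by
  have hI : uIcc (0 : ℝ) 1 = Icc 0 1 := uIcc_of_le zero_le_one
  have := continuousOn_primitive_interval (μ := volume) (a := 0) (b := 1)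
    (((htwoDensity_continuousOn hn).mono Icc_subset_Ici_self).integrableOn_Icc.mono_set hI.le)
  rw [hI] at this
  exact this.congr fun q hq => htwo_eq_integral hn hq

lemma mul_htwo_one_le (hn : 2 ≤ n) : n * Htwo n 1 ≤ 2 + 4 * Real.log n := by
  have hn0 : (0 : ℝ) < n := by positivity
  have h1n : (1 / n : ℝ) ∈ Icc 0 1 :=
    ⟨by positivity, by rw [div_le_one hn0]; exact_mod_cast (by omega : 1 ≤ n)⟩
  have hsmall : ∫ t in (0 : ℝ)..1 / n, htwoDensity n t ≤ 2 / n := by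
    calc ∫ t in (0 : ℝ)..1 / n, htwoDensity n t ≤ ∫ _ in (0 : ℝ)..1 / n, (2 : ℝ) :=
          integral_mono_on h1n.1 (intervalIntegrable_htwoDensity hn le_rfl h1n.1)
            intervalIntegrable_const fun t ht => htwoDensity_le_two hn ⟨ht.1, ht.2.trans h1n.2⟩
      _ = 2 / n := by simp only [intervalIntegral.integral_const, smul_eq_mul]; ring
  have hlarge : ∫ t in (1 / n : ℝ)..1, htwoDensity n t ≤ 4 / n * Real.log n := by
    simpa using integral_le_mul_log_of_le_div (by positivity) h1n.2
      (intervalIntegrable_htwoDensity hn h1n.1 zero_le_one)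
      fun t ht => htwoDensity_le_div hn ⟨lt_of_lt_of_le (by positivity) ht.1, ht.2⟩
  rw [htwo_eq_integral hn ⟨zero_le_one, le_rfl⟩, ← integral_add_adjacent_intervals
    (intervalIntegrable_htwoDensity hn le_rfl h1n.1)
    (intervalIntegrable_htwoDensity hn h1n.1 zero_le_one)]
  calc (n : ℝ) * (_ + _) ≤ n * (2 / n + 4 / n * Real.log n) := by gcongr
    _ = 2 + 4 * Real.log n := by field_simp

lemma log_le_mul_htwo_half (hn : 2 ≤ n) : Real.log n / 24 ≤ n * Htwo n (1 / 2) := by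
  have h2 : (2 : ℝ) ≤ n := by exact_mod_cast hn
  have ha : (0 : ℝ) < 1 / (2 * n) := by positivity
  have hah : 1 / (2 * n) ≤ (1 / 2 : ℝ) := by
    rw [div_le_div_iff₀ (by positivity) (by norm_num)]
    linarith
  have hlarge : 1 / (24 * n) * Real.log n ≤ ∫ t in (1 / (2 * n) : ℝ)..1 / 2, htwoDensity n t := by
    have e : (1 / 2 : ℝ) / (1 / (2 * n)) = n := by field_simp
    have := mul_log_le_integral_of_div_le ha hah
      (intervalIntegrable_htwoDensity hn ha.le (by norm_num))
      fun t ht => div_le_htwoDensity hn ht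
    rwa [e] at this
  have hsmall : 0 ≤ ∫ t in (0 : ℝ)..1 / (2 * n), htwoDensity n t :=
    integral_nonneg ha.le fun t ht =>
      htwoDensity_nonneg hn ⟨ht.1, ht.2.trans (hah.trans (by norm_num))⟩
  rw [htwo_eq_integral hn ⟨by norm_num, by norm_num⟩, ← integral_add_adjacent_intervals
    (intervalIntegrable_htwoDensity hn le_rfl ha.le)
    (intervalIntegrable_htwoDensity hn ha.le (by norm_num))]
  calc Real.log n / 24 = n * (1 / (24 * n) * Real.log n) := by field_simp
    _ ≤ n * (_ + _) := by gcongr; linarith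

end Htwo

theorem stmt_12 (v v' : ℝ → ℝ) (L' L : ℝ) (hL' : 0 < L') (hL : 0 < L)
    (hderiv : ∀ q ∈ Set.Icc (0:ℝ) 1, HasDerivAt v (v' q) q)
    (hlow : ∀ q ∈ Set.Icc (0:ℝ) 1, L' ≤ |v' q|)
    (hup : ∀ q ∈ Set.Icc (0:ℝ) 1, |v' q| ≤ L) :
    ∃ c C : ℝ, 0 < c ∧ 0 < C ∧
      ∀ n : ℕ, 2 ≤ n →
        c * Real.log n ≤ n * ∫ q in (0:ℝ)..1, |v' q| * Htwo n q ∧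
          n * ∫ q in (0:ℝ)..1, |v' q| * Htwo n q ≤ C * Real.log n := by
  refine ⟨L' / 48, 8 * L, by positivity, by positivity, fun n hn => ?_⟩
  have hint : IntervalIntegrable (fun q => |v' q| * Htwo n q) volume 0 1 :=
    (intervalIntegrable_of_hasDerivAt_of_abs_le zero_le_one hderiv hup).abs.mul_continuousOn
      (by rw [uIcc_of_le zero_le_one]; exact htwo_continuousOn hn)
  have hH : ∀ q ∈ Icc (0 : ℝ) 1, 0 ≤ Htwo n q := fun q hq => htwo_nonneg hn hq
  have hlog : 1 / 2 ≤ Real.log n :=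
    calc 1 / 2 ≤ Real.log 2 := by linarith [Real.log_two_gt_d9]
      _ ≤ Real.log n := Real.log_le_log two_pos (by exact_mod_cast hn)
  constructor
  · calc L' / 48 * Real.log n = L' / 2 * (Real.log n / 24) := by ring
      _ ≤ L' / 2 * (n * Htwo n (1 / 2)) := by gcongr; exact log_le_mul_htwo_half hn
      _ = n * (L' * Htwo n (1 / 2) * (1 - 1 / 2)) := by ring
      _ ≤ n * ∫ q in (0:ℝ)..1, |v' q| * Htwo n q := by
        gcongr
        exact mul_le_integral_mul_of_monotoneOn (by norm_num) (by norm_num) hint hL'.le hlow hH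
          (htwo_monotoneOn hn)
  · calc n * ∫ q in (0:ℝ)..1, |v' q| * Htwo n q ≤ n * (L * Htwo n 1 * (1 - 0)) := by
          gcongr
          exact integral_mul_le_of_monotoneOn zero_le_one hint hL.le hup hH (htwo_monotoneOn hn)
      _ = L * (n * Htwo n 1) := by ring
      _ ≤ L * (2 + 4 * Real.log n) := by gcongr; exact mul_htwo_one_le hn
      _ ≤ 8 * L * Real.log n := by nlinarith
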